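/- Let B' ⊆ B ⊂ R^d be finite nonempty sets and let A ⊂ R^d be a finite nonempty set disjoint from B, such that ‖μ(A)−μ(B')‖² ≤ ‖μ(A)−μ(B)‖². Then D(A,B') ≤ D(A,B). -/

import Mathlib

open Finset
open scoped Classical

noncomputable def centroid {d : ℕ} (P : Finset (EuclideanSpace ℝ (Fin d))) :
    EuclideanSpace ℝ (Fin d) :=
  (P.card : ℝ)⁻¹ • ∑ p ∈ P, p

noncomputable def Delta {d : ℕ} (P : Finset (EuclideanSpace ℝ (Fin d))) : ℝ :=
  ∑ p ∈ P, ‖p - centroid P‖ ^ 2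

noncomputable def mergeD {d : ℕ} (A B : Finset (EuclideanSpace ℝ (Fin d))) : ℝ :=
  Delta (A ∪ B) - Delta A - Delta B

/-!
Huygens' parallel-axis identity `∑ ‖p - x‖² = Δ(P) + |P| ‖μ(P) - x‖²`, applied to `A ∪ B` with
`x = μ(A)`, gives Ward's formula `D(A, B) = |A||B| / (|A| + |B|) · ‖μ(A) - μ(B)‖²`.
The weight `ab / (a + b)` is monotone in `b`, and `|B'| ≤ |B|`, so both factors of `D(A, B')`
are at most those of `D(A, B)`.
-/

section Centroid

variable {d : ℕ}

lemma card_smul_centroid (P : Finset (EuclideanSpace ℝ (Fin d))) :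
    (#P : ℝ) • centroid P = ∑ p ∈ P, p := by
  rcases P.eq_empty_or_nonempty with rfl | hP
  · simp
  · rw [_root_.centroid, smul_smul, mul_inv_cancel₀ (by exact_mod_cast hP.card_ne_zero), one_smul]

lemma sum_sub_centroid (P : Finset (EuclideanSpace ℝ (Fin d))) :
    ∑ p ∈ P, (p - centroid P) = 0 := by
  rw [sum_sub_distrib, sum_const, ← card_smul_centroid, Nat.cast_smul_eq_nsmul, sub_self]

lemma sum_norm_sub_sq_eq_Delta_add (P : Finset (EuclideanSpace ℝ (Fin d)))
    (x : EuclideanSpace ℝ (Fin d)) :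
    ∑ p ∈ P, ‖p - x‖ ^ 2 = Delta P + #P * ‖centroid P - x‖ ^ 2 := by
  have expand : ∀ p : EuclideanSpace ℝ (Fin d), ‖p - x‖ ^ 2 =
      ‖p - centroid P‖ ^ 2 + 2 * inner ℝ (p - centroid P) (centroid P - x) +
        ‖centroid P - x‖ ^ 2 := fun p => by
    rw [← norm_add_sq_real, sub_add_sub_cancel]
  rw [sum_congr rfl fun p _ => expand p]
  simp only [sum_add_distrib, ← mul_sum, ← sum_inner, sum_sub_centroid, inner_zero_left,
    sum_const, nsmul_eq_mul, Delta]
  ring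

lemma card_add_smul_centroid_union_sub {A B : Finset (EuclideanSpace ℝ (Fin d))}
    (hAB : Disjoint A B) :
    ((#A : ℝ) + #B) • (centroid (A ∪ B) - centroid A) = (#B : ℝ) • (centroid B - centroid A) := by
  have hunion : ((#A : ℝ) + #B) • centroid (A ∪ B) =
      (#A : ℝ) • centroid A + (#B : ℝ) • centroid B := by
    rw [← Nat.cast_add, ← card_union_of_disjoint hAB, card_smul_centroid, sum_union hAB,
      card_smul_centroid, card_smul_centroid]
  rw [smul_sub, hunion]
  module

lemma card_add_mul_mergeD {A B : Finset (EuclideanSpace ℝ (Fin d))} (hAB : Disjoint A B) :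
    ((#A : ℝ) + #B) * mergeD A B = #A * #B * ‖centroid A - centroid B‖ ^ 2 := by
  have huygens := sum_norm_sub_sq_eq_Delta_add (A ∪ B) (centroid A)
  rw [sum_union hAB, sum_norm_sub_sq_eq_Delta_add, sum_norm_sub_sq_eq_Delta_add,
    card_union_of_disjoint hAB, sub_self, norm_zero] at huygens
  have hshift := congrArg (‖·‖ ^ 2) (card_add_smul_centroid_union_sub hAB)
  simp only [norm_smul, mul_pow, Real.norm_eq_abs, sq_abs] at hshift
  rw [mergeD, norm_sub_rev (centroid A)]
  push_cast at huygens
  linear_combination -(#A + #B : ℝ) * huygens - hshift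

lemma mergeD_eq {A B : Finset (EuclideanSpace ℝ (Fin d))} (hAB : Disjoint A B) :
    mergeD A B = #A * #B / (#A + #B) * ‖centroid A - centroid B‖ ^ 2 := by
  rcases A.eq_empty_or_nonempty with rfl | hA
  · simp [mergeD, Delta]
  have hpos : (0 : ℝ) < #A + #B := by positivity
  rw [div_mul_eq_mul_div, eq_div_iff hpos.ne', mul_comm, card_add_mul_mergeD hAB]

end Centroid

lemma mul_div_add_le_mul_div_add {a b b' : ℝ} (ha : 0 ≤ a) (hb' : 0 ≤ b') (hb'b : b' ≤ b) :
    a * b' / (a + b') ≤ a * b / (a + b) := by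
  rcases ha.eq_or_lt with rfl | ha
  · simp
  rw [div_le_div_iff₀ (by positivity) (by linarith)]
  nlinarith [mul_le_mul_of_nonneg_left hb'b (mul_pos ha ha).le]

theorem mergeD_subcluster_general {d : ℕ} (A B B' : Finset (EuclideanSpace ℝ (Fin d)))
    (hB'B : B' ⊆ B) (hAB : Disjoint A B)
    (hcent : ‖centroid A - centroid B'‖ ^ 2 ≤ ‖centroid A - centroid B‖ ^ 2) :
    mergeD A B' ≤ mergeD A B := by
  rw [mergeD_eq hAB, mergeD_eq (hAB.mono_right hB'B)]
  have hweight := mul_div_add_le_mul_div_add (#A).cast_nonneg (#B').cast_nonneg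
    (by exact_mod_cast card_le_card hB'B : (#B' : ℝ) ≤ #B)
  exact mul_le_mul hweight hcent (by positivity) (by positivity)

theorem mergeD_subcluster {d : ℕ} (A B B' : Finset (EuclideanSpace ℝ (Fin d)))
    (hB' : B'.Nonempty) (hB'B : B' ⊆ B) (hA : A.Nonempty) (hAB : Disjoint A B)
    (hcent : ‖centroid A - centroid B'‖ ^ 2 ≤ ‖centroid A - centroid B‖ ^ 2) :
    mergeD A B' ≤ mergeD A B :=
  mergeD_subcluster_general A B B' hB'B hAB hcent
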